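/- arXiv:1003.2142 — 2 statements merged into one kernel-verified Lean document; each statement's English description precedes it below -/
import Mathlib

section
/- Let p_A be a path minimizing the auxiliary length ω_A(p) = Σ_{e∈p} max_k ω_k(e)/W_k among all s–t paths, and suppose there exists an s–t path p_o with ω_k(p_o) ≤ δ_o·W_k for all k. Then ω_k(p_A) ≤ K·δ_o·W_k for every k = 1,...,K. -/
/-- The `k`-th weight of a path (a list of edges): sum of edge weights. -/
noncomputable def pathWeight {E : Type*} (w : E → ℝ) (p : List E) : ℝ :=
  (p.map w).sum

/-- The auxiliary weight of an edge: `max_k ω_k(e) / W_k`. -/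
noncomputable def auxWeight {E : Type*} {K : ℕ} (hK : 0 < K)
    (ω : E → Fin K → ℝ) (W : Fin K → ℝ) (e : E) : ℝ :=
  Finset.univ.sup' (Finset.univ_nonempty_iff.mpr (Fin.pos_iff_nonempty.mp hK))
    (fun k => ω e k / W k)

/-- The (max-normalized) length of a path: `max_k ω_k(p) / W_k`. -/
noncomputable def pathLen {E : Type*} {K : ℕ} (hK : 0 < K)
    (ω : E → Fin K → ℝ) (W : Fin K → ℝ) (p : List E) : ℝ :=
  Finset.univ.sup' (Finset.univ_nonempty_iff.mpr (Fin.pos_iff_nonempty.mp hK))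
    (fun k => pathWeight (fun e => ω e k) p / W k)

lemma list_sum_comm' {E ι : Type*} (s : Finset ι) (f : E → ι → ℝ) (p : List E) :
    (p.map (fun e => ∑ j ∈ s, f e j)).sum = ∑ j ∈ s, (p.map (fun e => f e j)).sum := by
  induction p with
  | nil => simp
  | cons e t ih => simp [ih, Finset.sum_add_distrib]

/-- K-approximation theorem: if `p_A` minimizes the auxiliary length among all
`s–t` paths (the set `P`), and some `s–t` path `p_o` satisfies `ω_k(p_o) ≤ δ_o·W_k` for all
`k`, then `ω_k(p_A) ≤ K·δ_o·W_k` for every `k`. -/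
theorem greedy_K_approximation {E : Type*} {K : ℕ} (hK : 0 < K)
    (ω : E → Fin K → ℝ) (W : Fin K → ℝ)
    (hω : ∀ e k, 0 ≤ ω e k) (hW : ∀ k, 0 < W k)
    (P : Set (List E))  -- the set of s–t paths in the graph
    (pA : List E) (hpA : pA ∈ P)
    (hshort : ∀ p ∈ P, (pA.map (auxWeight hK ω W)).sum ≤ (p.map (auxWeight hK ω W)).sum)
    (po : List E) (hpo : po ∈ P) (δo : ℝ)
    (hfeas : ∀ k, pathWeight (fun e => ω e k) po ≤ δo * W k) :
    ∀ k, pathWeight (fun e => ω e k) pA ≤ K * δo * W k := by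
  intro k
  have hne : (Finset.univ : Finset (Fin K)).Nonempty :=
    Finset.univ_nonempty_iff.mpr (Fin.pos_iff_nonempty.mp hK)
  -- step 1: ω_k(pA)/W k ≤ auxsum pA
  have h1 : pathWeight (fun e => ω e k) pA / W k ≤ (pA.map (auxWeight hK ω W)).sum := by
    rw [pathWeight, div_le_iff₀ (hW k)]
    rw [← List.sum_map_mul_right]
    apply List.sum_le_sum
    intro e he
    have : ω e k / W k ≤ auxWeight hK ω W e :=
      Finset.le_sup' (fun j => ω e j / W j) (Finset.mem_univ k)
    calc ω e k = ω e k / W k * W k := by rw [div_mul_cancel₀ _ (hW k).ne']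
      _ ≤ auxWeight hK ω W e * W k :=
          mul_le_mul_of_nonneg_right this (hW k).le
  -- step 2: auxsum po ≤ Σ_k ω_k(po)/W k ≤ K δo
  have h2 : (po.map (auxWeight hK ω W)).sum ≤
      ∑ j : Fin K, pathWeight (fun e => ω e j) po / W j := by
    have : ∀ e ∈ po, auxWeight hK ω W e ≤ ∑ j : Fin K, ω e j / W j := by
      intro e _
      apply Finset.sup'_le
      intro j _
      exact Finset.single_le_sum (fun i _ => div_nonneg (hω e i) (hW i).le)
        (Finset.mem_univ j)
    calc (po.map (auxWeight hK ω W)).sum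
        ≤ (po.map (fun e => ∑ j : Fin K, ω e j / W j)).sum :=
          List.sum_le_sum (by simpa using this)
      _ = ∑ j : Fin K, pathWeight (fun e => ω e j) po / W j := by
          simp only [pathWeight]
          rw [list_sum_comm']
          refine Finset.sum_congr rfl fun j _ => ?_
          simp [div_eq_mul_inv, List.sum_map_mul_right]
  have h3 : ∑ j : Fin K, pathWeight (fun e => ω e j) po / W j ≤ K * δo := by
    calc ∑ j : Fin K, pathWeight (fun e => ω e j) po / W j
        ≤ ∑ j : Fin K, δo := by
          apply Finset.sum_le_sum
          intro j _
          rw [div_le_iff₀ (hW j)]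
          simpa using hfeas j
      _ = K * δo := by simp [mul_comm]
  have := (h1.trans (hshort po hpo)).trans (h2.trans h3)
  rw [div_le_iff₀ (hW k)] at this
  linarith [this]
end

section
/- Suppose there exists an s–t path. Then the path p_A computed by taking a shortest path under the auxiliary weight ω_A(e) = max_k ω_k(e)/W_k satisfies l(p_A) ≤ K·δ_o, where l(p) = max_k ω_k(p)/W_k and δ_o = min over s–t simple paths p of l(p). -/
private lemma list_sum_div {E : Type*} (w : E → ℝ) (c : ℝ) (p : List E) :
    (p.map w).sum / c = (p.map (fun e => w e / c)).sum := by
  induction p with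
  | nil => simp
  | cons a l ih => simp [add_div, ih]

private lemma list_sum_finsum {E : Type*} {K : ℕ} (f : E → Fin K → ℝ) (p : List E) :
    (p.map (fun e => ∑ k, f e k)).sum = ∑ k, (p.map (fun e => f e k)).sum := by
  induction p with
  | nil => simp
  | cons a l ih => simp [ih, Finset.sum_add_distrib]

private lemma len_le_aux {E : Type*} {K : ℕ} (hK : 0 < K)
    (ω : E → Fin K → ℝ) (W : Fin K → ℝ) (p : List E) :
    pathLen hK ω W p ≤ (p.map (auxWeight hK ω W)).sum := by
  apply Finset.sup'_le
  intro k _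
  rw [pathWeight, list_sum_div]
  apply List.sum_le_sum
  intro e _
  exact Finset.le_sup' (fun k => ω e k / W k) (Finset.mem_univ k)

private lemma aux_le_K_len {E : Type*} {K : ℕ} (hK : 0 < K)
    (ω : E → Fin K → ℝ) (W : Fin K → ℝ)
    (hω : ∀ e k, 0 ≤ ω e k) (hW : ∀ k, 0 < W k) (p : List E) :
    (p.map (auxWeight hK ω W)).sum ≤ K * pathLen hK ω W p := by
  have h1 : (p.map (auxWeight hK ω W)).sum ≤ (p.map (fun e => ∑ k, ω e k / W k)).sum := by
    apply List.sum_le_sum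
    intro e _
    apply Finset.sup'_le
    intro k _
    exact Finset.single_le_sum (fun j _ => div_nonneg (hω e j) (hW j).le) (Finset.mem_univ k)
  refine h1.trans ?_
  rw [list_sum_finsum]
  have h2 : ∀ k : Fin K, (p.map (fun e => ω e k / W k)).sum ≤ pathLen hK ω W p := by
    intro k
    rw [← list_sum_div]
    exact Finset.le_sup' (fun k => pathWeight (fun e => ω e k) p / W k) (Finset.mem_univ k)
  calc ∑ k, (p.map (fun e => ω e k / W k)).sum ≤ ∑ _k : Fin K, pathLen hK ω W p :=
        Finset.sum_le_sum (fun k _ => h2 k)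
    _ = K * pathLen hK ω W p := by simp [Finset.sum_const, nsmul_eq_mul]

/-- if some `s–t` path exists, the greedy path `p_A` (shortest under the
auxiliary weight) satisfies `l(p_A) ≤ K·δ_o`, where `δ_o` is the attained minimum of `l`
over all `s–t` paths. -/
theorem greedy_len_le_K_deltaOpt {E : Type*} {K : ℕ} (hK : 0 < K)
    (ω : E → Fin K → ℝ) (W : Fin K → ℝ)
    (hω : ∀ e k, 0 ≤ ω e k) (hW : ∀ k, 0 < W k)
    (P : Set (List E))  -- the set of s–t paths in the graph
    (δo : ℝ)
    (hattained : ∃ p ∈ P, pathLen hK ω W p = δo)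
    (hmin : ∀ p ∈ P, δo ≤ pathLen hK ω W p)
    (pA : List E) (hpA : pA ∈ P)
    (hshort : ∀ p ∈ P, (pA.map (auxWeight hK ω W)).sum ≤ (p.map (auxWeight hK ω W)).sum) :
    pathLen hK ω W pA ≤ K * δo := by
  obtain ⟨po, hpo, hlen⟩ := hattained
  calc pathLen hK ω W pA ≤ (pA.map (auxWeight hK ω W)).sum := len_le_aux hK ω W pA
    _ ≤ (po.map (auxWeight hK ω W)).sum := hshort po hpo
    _ ≤ K * pathLen hK ω W po := aux_le_K_len hK ω W hω hW po
    _ = K * δo := by rw [hlen]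
end
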